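/- The tensor product of types is commutative and associative up to type equivalence: for all types x, y, z, one has x ⊗ y ≡ y ⊗ x and (x ⊗ y) ⊗ z ≡ x ⊗ (y ⊗ z), where x ⊗ y := (x → (y → I)) → I and equivalence means equality of the pairs (λ, Δ) (up to the canonical reordering of tensor factors). -/

import Mathlib

open Matrix Kronecker
open scoped ComplexOrder

/-- Types of higher-order quantum theory. The trivial type `I` is `elem 1`. -/
inductive QT where
  | elem (n : ℕ)
  | arrow (x y : QT)

/-- The index type of the Hilbert space `H_x` associated to a type `x`. -/
def Idx : QT → Type
  | .elem n => Fin n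
  | .arrow x y => Idx x × Idx y

instance idxFintype : (x : QT) → Fintype (Idx x)
  | .elem n => inferInstanceAs (Fintype (Fin n))
  | .arrow x y =>
      letI := idxFintype x; letI := idxFintype y
      inferInstanceAs (Fintype (Idx x × Idx y))

instance idxDecEq : (x : QT) → DecidableEq (Idx x)
  | .elem n => inferInstanceAs (DecidableEq (Fin n))
  | .arrow x y =>
      letI := idxDecEq x; letI := idxDecEq y
      inferInstanceAs (DecidableEq (Idx x × Idx y))

/-- Partial trace over the first tensor factor. -/
noncomputable def ptrA {ι κ : Type} [Fintype ι]
    (M : Matrix (ι × κ) (ι × κ) ℂ) : Matrix κ κ ℂ :=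
  fun k l => ∑ i : ι, M (i, k) (i, l)

/-- Deterministic events of type `x`, defined recursively: for elementary types,
positive unit-trace operators; for `x → y`, positive operators `R` such that
`Tr_x[(Sᵀ ⊗ 1) R] ∈ Det y` for every `S ∈ Det x`. -/
noncomputable def Det : (x : QT) → Set (Matrix (Idx x) (Idx x) ℂ)
  | .elem n => {R | R.PosSemidef ∧ R.trace = 1}
  | .arrow x y =>
      setOf (fun (R : Matrix (Idx x × Idx y) (Idx x × Idx y) ℂ) =>
        R.PosSemidef ∧
        ∀ S ∈ Det x, ptrA ((Sᵀ ⊗ₖ (1 : Matrix (Idx y) (Idx y) ℂ)) * R) ∈ Det y)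

/-- The real subspace of Hermitian operators. -/
noncomputable def hermSub (ι : Type) [Fintype ι] [DecidableEq ι] :
    Submodule ℝ (Matrix ι ι ℂ) where
  carrier := {X | X.IsHermitian}
  add_mem' := fun ha hb => ha.add hb
  zero_mem' := Matrix.isHermitian_zero
  smul_mem' := fun c X hX => by
    show ((c • X)ᴴ = c • X)
    rw [Matrix.conjTranspose_smul, star_trivial, hX.eq]

/-- The real subspace of traceless Hermitian operators. -/
noncomputable def tlHermSub (ι : Type) [Fintype ι] [DecidableEq ι] :
    Submodule ℝ (Matrix ι ι ℂ) where
  carrier := {X | X.IsHermitian ∧ X.trace = 0}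
  add_mem' := fun ha hb => ⟨ha.1.add hb.1, by rw [trace_add, ha.2, hb.2, add_zero]⟩
  zero_mem' := ⟨Matrix.isHermitian_zero, Matrix.trace_zero ι ℂ⟩
  smul_mem' := fun c X hX =>
    ⟨by show ((c • X)ᴴ = c • X)
        rw [Matrix.conjTranspose_smul, star_trivial, hX.1.eq],
     by rw [trace_smul, hX.2, smul_zero]⟩

/-- The Hilbert–Schmidt orthogonal complement of `S` inside `B`. -/
noncomputable def perpWithin {ι : Type} [Fintype ι] [DecidableEq ι]
    (S B : Submodule ℝ (Matrix ι ι ℂ)) : Submodule ℝ (Matrix ι ι ℂ) where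
  carrier := {Z | Z ∈ B ∧ ∀ Y ∈ S, (Y * Z).trace = 0}
  add_mem' := fun ha hb =>
    ⟨B.add_mem ha.1 hb.1, fun Y hY => by
      rw [mul_add, trace_add, ha.2 Y hY, hb.2 Y hY, add_zero]⟩
  zero_mem' := ⟨B.zero_mem, fun Y _ => by simp⟩
  smul_mem' := fun c Z hZ =>
    ⟨B.smul_mem c hZ.1, fun Y hY => by
      rw [Matrix.mul_smul, trace_smul, hZ.2 Y hY, smul_zero]⟩

/-- Tensor product of operator subspaces, spanned by Kronecker products. -/
noncomputable def tensorSub {ι κ : Type} [Fintype ι] [DecidableEq ι]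
    [Fintype κ] [DecidableEq κ]
    (P : Submodule ℝ (Matrix ι ι ℂ)) (Q : Submodule ℝ (Matrix κ κ ℂ)) :
    Submodule ℝ (Matrix (ι × κ) (ι × κ) ℂ) :=
  Submodule.span ℝ {A | ∃ X ∈ P, ∃ Y ∈ Q, A = X ⊗ₖ Y}

/-- The one-dimensional subspace `L_e` spanned by the identity. -/
noncomputable def idSub (ι : Type) [Fintype ι] [DecidableEq ι] :
    Submodule ℝ (Matrix ι ι ℂ) :=
  Submodule.span ℝ {(1 : Matrix ι ι ℂ)}

/-- The subspace `Δ_x` of traceless Hermitian operators characterizing the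
deterministic events of type `x`:
`Δ_A = Traceless(H_A)` for elementary `A`, and
`Δ_{x→y} = [Herm(H_x) ⊗ Δ_y] ⊕ [Δ̄_x ⊗ Δ_y^⊥]`, where `Δ̄_x` is the complement of
`Δ_x` inside the traceless Hermitian operators and `Δ_y^⊥` its orthogonal
complement inside the Hermitian operators. -/
noncomputable def Delta : (x : QT) → Submodule ℝ (Matrix (Idx x) (Idx x) ℂ)
  | .elem n => tlHermSub (Fin n)
  | .arrow x y =>
      (tensorSub (hermSub (Idx x)) (Delta y) ⊔
        tensorSub (perpWithin (Delta x) (tlHermSub (Idx x)))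
          (perpWithin (Delta y) (hermSub (Idx y))) :
        Submodule ℝ (Matrix (Idx x × Idx y) (Idx x × Idx y) ℂ))

/-- The normalization constant `λ_x`: `λ_A = 1/d_A`, `λ_{x→y} = λ_y/(d_x λ_x)`. -/
noncomputable def lam : QT → ℝ
  | .elem n => 1 / n
  | .arrow x y => lam y / (Fintype.card (Idx x) * lam x)

/-- The tensor product of types: `x ⊗ y := (x → (y → I)) → I`. -/
def tens (x y : QT) : QT :=
  QT.arrow (QT.arrow x (QT.arrow y (QT.elem 1))) (QT.elem 1)

/-- The canonical identification of the index set of `H_{x ⊗ y}` with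
`Idx x × Idx y`. -/
def etens (x y : QT) : Idx (tens x y) ≃ Idx x × Idx y :=
  (Equiv.prodUnique (Idx x × (Idx y × Fin 1)) (Fin 1)).trans
    (Equiv.prodCongr (Equiv.refl (Idx x)) (Equiv.prodUnique (Idx y) (Fin 1)))

/-!
`Δ_x` is the traceless part of `E_x := L_e ⊕ Δ_x` (`idSupDelta`), so it suffices to show that
`E_{x ⊗ y} = E_x ⊗ E_y` up to the canonical reordering of factors, and the right-hand side is
visibly commutative and associative. Unfolding `x ⊗ y = (x → (y → I)) → I` with `Δ_I = 0` gives
`Δ_{w → I} = Δ̄_w ⊗ 1` (`Δ̄ = deltaCompl`), whose Hermitian orthogonal complement is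
`E_w ⊗ 1`; hence `Δ_{x → (y → I)} = Herm_x ⊗ (Δ̄_y ⊗ 1) ⊕ Δ̄_x ⊗ (E_y ⊗ 1)`, whose traceless
orthogonal complement is `1 ⊗ (Δ_y ⊗ 1) ⊕ Δ_x ⊗ (E_y ⊗ 1)`, and adding the identity yields
`E_x ⊗ (E_y ⊗ 1)`. The complements are computed from `Herm (H ⊗ K) = Herm H ⊗ Herm K` and from
`Tr (X²) > 0` for Hermitian `X ≠ 0`. Likewise `λ_{x ⊗ y} = λ_x λ_y`.
-/

open scoped ComplexStarModule

section HermitianSubspaces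

variable {ι : Type} [Fintype ι]

lemma Matrix.IsHermitian.trace_mul_self_eq_zero_iff {X : Matrix ι ι ℂ} (hX : X.IsHermitian) :
    (X * X).trace = 0 ↔ X = 0 := by
  have := trace_conjTranspose_mul_self_eq_zero_iff (A := X)
  rwa [hX.eq] at this

lemma Matrix.IsHermitian.im_trace_mul {X Y : Matrix ι ι ℂ} (hX : X.IsHermitian)
    (hY : Y.IsHermitian) :
    (X * Y).trace.im = 0 := by
  rw [← Complex.conj_eq_iff_im, ← Complex.star_def, ← trace_conjTranspose, conjTranspose_mul,
    hX.eq, hY.eq, trace_mul_comm]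

variable (ι) in
noncomputable def traceMul : Matrix ι ι ℂ →ₗ[ℝ] Matrix ι ι ℂ →ₗ[ℝ] ℂ :=
  (LinearMap.mul ℝ (Matrix ι ι ℂ)).compr₂ (traceLinearMap ι ℝ ℂ)

@[simp]
lemma traceMul_apply (X Y : Matrix ι ι ℂ) : traceMul ι X Y = (X * Y).trace := rfl

def TraceOrtho (S T : Submodule ℝ (Matrix ι ι ℂ)) : Prop :=
  Submodule.map₂ (traceMul ι) S T = ⊥

lemma traceOrtho_iff {S T : Submodule ℝ (Matrix ι ι ℂ)} :
    TraceOrtho S T ↔ ∀ Y ∈ S, ∀ Z ∈ T, (Y * Z).trace = 0 := by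
  simp only [TraceOrtho, eq_bot_iff, Submodule.map₂_le, Submodule.mem_bot, traceMul_apply]

lemma TraceOrtho.symm {S T : Submodule ℝ (Matrix ι ι ℂ)} (h : TraceOrtho S T) :
    TraceOrtho T S :=
  traceOrtho_iff.mpr fun Y hY Z hZ => by rw [trace_mul_comm]; exact traceOrtho_iff.mp h Z hZ Y hY

lemma TraceOrtho.mono {S S' T T' : Submodule ℝ (Matrix ι ι ℂ)} (h : TraceOrtho S T)
    (hS : S' ≤ S) (hT : T' ≤ T) : TraceOrtho S' T' :=
  eq_bot_iff.mpr ((Submodule.map₂_le_map₂ hS hT).trans h.le)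

lemma traceOrtho_sup_left {S S' T : Submodule ℝ (Matrix ι ι ℂ)} :
    TraceOrtho (S ⊔ S') T ↔ TraceOrtho S T ∧ TraceOrtho S' T := by
  simp [TraceOrtho, Submodule.map₂_sup_left]

lemma traceOrtho_sup_right {S T T' : Submodule ℝ (Matrix ι ι ℂ)} :
    TraceOrtho S (T ⊔ T') ↔ TraceOrtho S T ∧ TraceOrtho S T' := by
  simp [TraceOrtho, Submodule.map₂_sup_right]

variable [DecidableEq ι]

lemma mem_tlHermSub {X : Matrix ι ι ℂ} : X ∈ tlHermSub ι ↔ X.IsHermitian ∧ X.trace = 0 :=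
  Iff.rfl

lemma tlHermSub_le_hermSub : tlHermSub ι ≤ hermSub ι := fun _ h => h.1

lemma perpWithin_le (S B : Submodule ℝ (Matrix ι ι ℂ)) : perpWithin S B ≤ B := fun _ h => h.1

lemma perpWithin_bot (B : Submodule ℝ (Matrix ι ι ℂ)) : perpWithin ⊥ B = B :=
  le_antisymm (perpWithin_le _ _) fun Z hZ =>
    ⟨hZ, fun Y hY => by rw [(Submodule.mem_bot ℝ).mp hY, zero_mul, trace_zero]⟩

lemma traceOrtho_perpWithin (S B : Submodule ℝ (Matrix ι ι ℂ)) :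
    TraceOrtho S (perpWithin S B) :=
  traceOrtho_iff.mpr fun Y hY _ hZ => hZ.2 Y hY

lemma le_sup_perpWithin {S B : Submodule ℝ (Matrix ι ι ℂ)} (hSB : S ≤ B)
    (hB : B ≤ hermSub ι) : B ≤ S ⊔ perpWithin S B := by
  let form : LinearMap.BilinForm ℝ (Matrix ι ι ℂ) := (traceMul ι).compr₂ Complex.reLm
  have hrefl : form.IsRefl := fun X Y h => by
    simpa [form, trace_mul_comm X] using h
  have hcompl : IsCompl S (form.orthogonal S) := by
    refine (LinearMap.BilinForm.isCompl_orthogonal_iff_disjoint hrefl).mpr ?_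
    refine Submodule.disjoint_def.mpr fun X hXS hX => ?_
    have hXX : form X X = 0 := hX X hXS
    have hH : X.IsHermitian := hB (hSB hXS)
    exact hH.trace_mul_self_eq_zero_iff.mp (Complex.ext hXX (hH.im_trace_mul hH))
  intro Z hZ
  obtain ⟨s, hs, t, ht, rfl⟩ :=
    Submodule.mem_sup.mp (hcompl.sup_eq_top ▸ Submodule.mem_top (x := Z))
  have htB : t ∈ B := by simpa using B.sub_mem hZ (hSB hs)
  refine Submodule.mem_sup.mpr ⟨s, hs, t, ⟨htB, fun Y hY => ?_⟩, rfl⟩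
  exact Complex.ext (ht Y hY) ((hB (hSB hY)).im_trace_mul (hB htB))

lemma perpWithin_eq_of_traceOrtho {S T B : Submodule ℝ (Matrix ι ι ℂ)} (hS : S ≤ hermSub ι)
    (hTB : T ≤ B) (hB : B ≤ S ⊔ T) (h : TraceOrtho S T) : perpWithin S B = T := by
  refine le_antisymm (fun Z ⟨hZB, hZ⟩ => ?_)
    fun Z hZ => ⟨hTB hZ, fun Y hY => traceOrtho_iff.mp h Y hY Z hZ⟩
  obtain ⟨s, hs, t, ht, rfl⟩ := Submodule.mem_sup.mp (hB hZB)
  have hss : (s * s).trace = 0 := by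
    simpa [mul_add, traceOrtho_iff.mp h s hs t ht] using hZ s hs
  rwa [(hS hs).trace_mul_self_eq_zero_iff.mp hss, zero_add]

end HermitianSubspaces

section IdentitySubspace

variable {ι : Type} [Fintype ι] [DecidableEq ι]

lemma mem_idSub {X : Matrix ι ι ℂ} : X ∈ idSub ι ↔ ∃ c : ℝ, c • (1 : Matrix ι ι ℂ) = X :=
  Submodule.mem_span_singleton

lemma one_mem_idSub : (1 : Matrix ι ι ℂ) ∈ idSub ι := Submodule.mem_span_singleton_self _

lemma idSub_le_hermSub : idSub ι ≤ hermSub ι :=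
  Submodule.span_le.mpr (Set.singleton_subset_iff.mpr isHermitian_one)

lemma eq_zero_of_mem_idSub_of_trace_eq_zero {X : Matrix ι ι ℂ} (hX : X ∈ idSub ι)
    (h : X.trace = 0) : X = 0 := by
  obtain ⟨c, rfl⟩ := mem_idSub.mp hX
  cases isEmpty_or_nonempty ι
  · exact Subsingleton.elim _ _
  · rw [trace_smul, trace_one, smul_eq_zero, Nat.cast_eq_zero, Fintype.card_eq_zero_iff,
      ← not_nonempty_iff] at h
    simp_all

lemma traceOrtho_tlHermSub_idSub : TraceOrtho (tlHermSub ι) (idSub ι) :=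
  traceOrtho_iff.mpr fun Y hY Z hZ => by
    obtain ⟨c, rfl⟩ := mem_idSub.mp hZ
    rw [Matrix.mul_smul, mul_one, trace_smul, hY.2, smul_zero]

lemma hermSub_eq_idSub_sup_tlHermSub : hermSub ι = idSub ι ⊔ tlHermSub ι := by
  refine le_antisymm (fun Z hZ => ?_) (sup_le idSub_le_hermSub tlHermSub_le_hermSub)
  cases isEmpty_or_nonempty ι
  · rw [Subsingleton.elim Z 0]; exact zero_mem _
  set c : ℝ := Z.trace.re / Fintype.card ι
  have hc : (c • (1 : Matrix ι ι ℂ)).trace = Z.trace := by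
    rw [trace_smul, trace_one, Complex.real_smul, Complex.ofReal_div, Complex.ofReal_natCast,
      div_mul_cancel₀ _ (by simp), ← Complex.conj_eq_iff_re, Complex.conj_eq_iff_im]
    simpa using hZ.im_trace_mul isHermitian_one
  have hZc : Z - c • 1 ∈ tlHermSub ι :=
    ⟨hZ.sub (isHermitian_one.smul (IsSelfAdjoint.all c)), by rw [trace_sub, hc, sub_self]⟩
  simpa using Submodule.add_mem_sup (Submodule.smul_mem _ c one_mem_idSub) hZc

lemma tlHermSub_eq_bot [Unique ι] : tlHermSub ι = ⊥ :=
  eq_bot_iff.mpr fun X ⟨_, htr⟩ => by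
    rw [Submodule.mem_bot]
    ext i j
    rw [Subsingleton.elim i default, Subsingleton.elim j default]
    simpa [trace] using htr

lemma hermSub_eq_idSub [Unique ι] : hermSub ι = idSub ι := by
  rw [hermSub_eq_idSub_sup_tlHermSub, tlHermSub_eq_bot, sup_bot_eq]

lemma idSub_sup_inf_tlHermSub {D : Submodule ℝ (Matrix ι ι ℂ)} (hD : D ≤ tlHermSub ι) :
    (idSub ι ⊔ D) ⊓ tlHermSub ι = D := by
  refine le_antisymm (fun Z ⟨hZ, hZt⟩ => ?_) (le_inf le_sup_right hD)
  obtain ⟨w, hw, d, hd, rfl⟩ := Submodule.mem_sup.mp hZ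
  have hwt : w.trace = 0 := by simpa [(hD hd).2] using hZt.2
  rwa [eq_zero_of_mem_idSub_of_trace_eq_zero hw hwt, zero_add]

lemma tlHermSub_le_of_hermSub_le {U : Submodule ℝ (Matrix ι ι ℂ)} (hU : U ≤ tlHermSub ι)
    (h : hermSub ι ≤ U ⊔ idSub ι) : tlHermSub ι ≤ U := by
  intro Z hZ
  have hZ' : Z ∈ (idSub ι ⊔ U) ⊓ tlHermSub ι :=
    ⟨sup_comm U (idSub ι) ▸ h (tlHermSub_le_hermSub hZ), hZ⟩
  rwa [idSub_sup_inf_tlHermSub hU] at hZ'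

end IdentitySubspace

section Tensor

@[simp]
lemma kroneckerBilinear_apply_apply {m n : Type} (A : Matrix m m ℂ) (B : Matrix n n ℂ) :
    kroneckerBilinear (R := ℝ) A B = A ⊗ₖ B := rfl

lemma Matrix.IsHermitian.kronecker {m n : Type} {A : Matrix m m ℂ} {B : Matrix n n ℂ}
    (hA : A.IsHermitian) (hB : B.IsHermitian) : (A ⊗ₖ B).IsHermitian := by
  rw [IsHermitian, conjTranspose_kronecker, hA.eq, hB.eq]

variable {ι κ : Type} [Fintype ι] [DecidableEq ι] [Fintype κ] [DecidableEq κ]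

lemma tensorSub_eq_map₂ (P : Submodule ℝ (Matrix ι ι ℂ)) (Q : Submodule ℝ (Matrix κ κ ℂ)) :
    tensorSub P Q = Submodule.map₂ (kroneckerBilinear (R := ℝ)) P Q := by
  rw [Submodule.map₂_eq_span_image2, tensorSub]
  congr 1
  ext A
  simp [eq_comm]

lemma kronecker_mem_tensorSub {P : Submodule ℝ (Matrix ι ι ℂ)} {Q : Submodule ℝ (Matrix κ κ ℂ)}
    {A : Matrix ι ι ℂ} {B : Matrix κ κ ℂ} (hA : A ∈ P) (hB : B ∈ Q) :
    A ⊗ₖ B ∈ tensorSub P Q :=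
  Submodule.subset_span ⟨A, hA, B, hB, rfl⟩

lemma tensorSub_le_iff {P : Submodule ℝ (Matrix ι ι ℂ)} {Q : Submodule ℝ (Matrix κ κ ℂ)}
    {R : Submodule ℝ (Matrix (ι × κ) (ι × κ) ℂ)} :
    tensorSub P Q ≤ R ↔ ∀ A ∈ P, ∀ B ∈ Q, A ⊗ₖ B ∈ R := by
  rw [tensorSub_eq_map₂, Submodule.map₂_le]
  rfl

lemma tensorSub_sup_left (P P' : Submodule ℝ (Matrix ι ι ℂ)) (Q : Submodule ℝ (Matrix κ κ ℂ)) :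
    tensorSub (P ⊔ P') Q = tensorSub P Q ⊔ tensorSub P' Q := by
  simp only [tensorSub_eq_map₂, Submodule.map₂_sup_left]

lemma tensorSub_sup_right (P : Submodule ℝ (Matrix ι ι ℂ)) (Q Q' : Submodule ℝ (Matrix κ κ ℂ)) :
    tensorSub P (Q ⊔ Q') = tensorSub P Q ⊔ tensorSub P Q' := by
  simp only [tensorSub_eq_map₂, Submodule.map₂_sup_right]

lemma tensorSub_bot (P : Submodule ℝ (Matrix ι ι ℂ)) :
    tensorSub P (⊥ : Submodule ℝ (Matrix κ κ ℂ)) = ⊥ := by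
  simp only [tensorSub_eq_map₂, Submodule.map₂_bot_right]

lemma tensorSub_idSub_idSub : tensorSub (idSub ι) (idSub κ) = idSub (ι × κ) := by
  rw [tensorSub_eq_map₂, idSub, idSub, Submodule.map₂_span_span, Set.image2_singleton,
    idSub, kroneckerBilinear_apply_apply, one_kronecker_one]

lemma tensorSub_le_hermSub {P : Submodule ℝ (Matrix ι ι ℂ)} {Q : Submodule ℝ (Matrix κ κ ℂ)}
    (hP : P ≤ hermSub ι) (hQ : Q ≤ hermSub κ) : tensorSub P Q ≤ hermSub (ι × κ) :=
  tensorSub_le_iff.mpr fun _ hA _ hB => (hP hA).kronecker (hQ hB)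

lemma tensorSub_le_tlHermSub_left {P : Submodule ℝ (Matrix ι ι ℂ)}
    {Q : Submodule ℝ (Matrix κ κ ℂ)} (hP : P ≤ tlHermSub ι) (hQ : Q ≤ hermSub κ) :
    tensorSub P Q ≤ tlHermSub (ι × κ) :=
  tensorSub_le_iff.mpr fun _ hA _ hB =>
    ⟨(hP hA).1.kronecker (hQ hB), by rw [trace_kronecker, (hP hA).2, zero_mul]⟩

lemma tensorSub_le_tlHermSub_right {P : Submodule ℝ (Matrix ι ι ℂ)}
    {Q : Submodule ℝ (Matrix κ κ ℂ)} (hP : P ≤ hermSub ι) (hQ : Q ≤ tlHermSub κ) :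
    tensorSub P Q ≤ tlHermSub (ι × κ) :=
  tensorSub_le_iff.mpr fun _ hA _ hB =>
    ⟨(hP hA).kronecker (hQ hB).1, by rw [trace_kronecker, (hQ hB).2, mul_zero]⟩

lemma traceOrtho_tensorSub {P P' : Submodule ℝ (Matrix ι ι ℂ)} {Q Q' : Submodule ℝ (Matrix κ κ ℂ)}
    (h : ∀ A ∈ P, ∀ A' ∈ P', ∀ B ∈ Q, ∀ B' ∈ Q', (A * A').trace * (B * B').trace = 0) :
    TraceOrtho (tensorSub P Q) (tensorSub P' Q') := by
  rw [TraceOrtho, tensorSub_eq_map₂, tensorSub_eq_map₂, Submodule.map₂_eq_span_image2 _ P,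
    Submodule.map₂_eq_span_image2 _ P', Submodule.map₂_span_span, Submodule.span_eq_bot]
  rintro _ ⟨_, ⟨A, hA, B, hB, rfl⟩, _, ⟨A', hA', B', hB', rfl⟩, rfl⟩
  simpa [← mul_kronecker_mul, trace_kronecker] using h A hA A' hA' B hB B' hB'

lemma TraceOrtho.tensorSub_left {P P' : Submodule ℝ (Matrix ι ι ℂ)}
    (h : TraceOrtho P P') (Q Q' : Submodule ℝ (Matrix κ κ ℂ)) :
    TraceOrtho (tensorSub P Q) (tensorSub P' Q') :=
  traceOrtho_tensorSub fun A hA A' hA' _ _ _ _ => by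
    rw [traceOrtho_iff.mp h A hA A' hA', zero_mul]

lemma TraceOrtho.tensorSub_right {Q Q' : Submodule ℝ (Matrix κ κ ℂ)}
    (h : TraceOrtho Q Q') (P P' : Submodule ℝ (Matrix ι ι ℂ)) :
    TraceOrtho (tensorSub P Q) (tensorSub P' Q') :=
  traceOrtho_tensorSub fun _ _ _ _ B hB B' hB' => by
    rw [traceOrtho_iff.mp h B hB B' hB', mul_zero]

end Tensor

section HermitianProduct

variable {ι κ : Type} [Fintype ι] [DecidableEq ι] [Fintype κ] [DecidableEq κ]

lemma mem_of_isHermitian_of_mem_span {V : Submodule ℝ (Matrix ι ι ℂ)} (hV : V ≤ hermSub ι)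
    {M : Matrix ι ι ℂ} (hM : M ∈ Submodule.span ℂ (V : Set (Matrix ι ι ℂ)))
    (hMh : M.IsHermitian) : M ∈ V := by
  -- `ℜ (∑ cᵢ vᵢ) = ∑ (re cᵢ) vᵢ`, and `ℜ M = M`.
  suffices h : ∀ c : ℂ, (ℜ (c • M) : Matrix ι ι ℂ) ∈ V by
    simpa [IsSelfAdjoint.coe_realPart hMh] using h 1
  clear hMh
  induction hM using Submodule.span_induction with
  | mem v hv =>
    intro c
    simpa [realPart_smul, IsSelfAdjoint.coe_realPart (hV hv),
      IsSelfAdjoint.imaginaryPart (hV hv)] using V.smul_mem c.re hv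
  | zero => simp
  | add u v _ _ hu hv => intro c; simpa [smul_add] using V.add_mem (hu c) (hv c)
  | smul d u _ hu => intro c; simpa [smul_smul] using hu (c * d)

lemma span_tensorSub_hermSub_eq_top :
    Submodule.span ℂ (tensorSub (hermSub ι) (hermSub κ) : Set (Matrix (ι × κ) (ι × κ) ℂ)) =
      ⊤ := by
  have hherm : ∀ (X : selfAdjoint (Matrix ι ι ℂ)) (Y : selfAdjoint (Matrix κ κ ℂ)),
      (X : Matrix ι ι ℂ) ⊗ₖ (Y : Matrix κ κ ℂ) ∈
        Submodule.span ℂ (tensorSub (hermSub ι) (hermSub κ) : Set (Matrix (ι × κ) (ι × κ) ℂ)) :=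
    fun X Y => Submodule.subset_span (kronecker_mem_tensorSub X.2 Y.2)
  have hkron : ∀ (A : Matrix ι ι ℂ) (B : Matrix κ κ ℂ),
      A ⊗ₖ B ∈
        Submodule.span ℂ (tensorSub (hermSub ι) (hermSub κ) : Set (Matrix (ι × κ) (ι × κ) ℂ)) := by
    intro A B
    rw [← realPart_add_I_smul_imaginaryPart A, ← realPart_add_I_smul_imaginaryPart B]
    simp only [add_kronecker, kronecker_add, smul_kronecker, kronecker_smul]
    exact add_mem (add_mem (hherm _ _) (Submodule.smul_mem _ _ (hherm _ _)))
      (Submodule.smul_mem _ _ (add_mem (hherm _ _) (Submodule.smul_mem _ _ (hherm _ _))))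
  refine eq_top_iff.mpr fun M _ => ?_
  rw [matrix_eq_sum_single M]
  refine Submodule.sum_mem _ fun ⟨i, k⟩ _ => Submodule.sum_mem _ fun ⟨j, l⟩ _ => ?_
  rw [← mul_one (M (i, k) (j, l)), ← smul_eq_mul, ← smul_single, ← mul_one (1 : ℂ),
    ← single_kronecker_single]
  exact Submodule.smul_mem _ _ (hkron _ _)

lemma hermSub_prod : hermSub (ι × κ) = tensorSub (hermSub ι) (hermSub κ) :=
  le_antisymm
    (fun _ hM => mem_of_isHermitian_of_mem_span (tensorSub_le_hermSub le_rfl le_rfl)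
      (by rw [span_tensorSub_hermSub_eq_top]; trivial) hM)
    (tensorSub_le_hermSub le_rfl le_rfl)

end HermitianProduct

section Reindex

variable {ι κ μ ν : Type}

noncomputable def reindexSub (e : ι ≃ κ) (P : Submodule ℝ (Matrix ι ι ℂ)) :
    Submodule ℝ (Matrix κ κ ℂ) :=
  P.map (reindexLinearEquiv ℝ ℂ e e).toLinearMap

lemma mem_reindexSub {e : ι ≃ κ} {P : Submodule ℝ (Matrix ι ι ℂ)} {X : Matrix κ κ ℂ} :
    X ∈ reindexSub e P ↔ X.submatrix e e ∈ P :=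
  Submodule.mem_map_equiv P

lemma reindexSub_reindexSub (e : ι ≃ κ) (f : κ ≃ μ) (P : Submodule ℝ (Matrix ι ι ℂ)) :
    reindexSub f (reindexSub e P) = reindexSub (e.trans f) P := by
  ext X
  simp only [mem_reindexSub, submatrix_submatrix]
  rfl

lemma reindexSub_refl (P : Submodule ℝ (Matrix ι ι ℂ)) : reindexSub (Equiv.refl ι) P = P := by
  ext X
  simp [mem_reindexSub]

lemma reindexSub_reindexSub_symm (e : ι ≃ κ) (P : Submodule ℝ (Matrix κ κ ℂ)) :
    reindexSub e (reindexSub e.symm P) = P := by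
  rw [reindexSub_reindexSub, Equiv.symm_trans_self, reindexSub_refl]

lemma reindexSub_inf (e : ι ≃ κ) (P Q : Submodule ℝ (Matrix ι ι ℂ)) :
    reindexSub e (P ⊓ Q) = reindexSub e P ⊓ reindexSub e Q :=
  Submodule.map_inf _ (reindexLinearEquiv ℝ ℂ e e).injective

variable [Fintype ι] [DecidableEq ι] [Fintype κ] [DecidableEq κ] [Fintype μ] [DecidableEq μ]
  [Fintype ν] [DecidableEq ν]

lemma reindexSub_tlHermSub (e : ι ≃ κ) : reindexSub e (tlHermSub ι) = tlHermSub κ := by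
  ext X
  have htr : (X.submatrix e e).trace = X.trace := Fintype.sum_equiv e _ _ fun _ => rfl
  simp [mem_reindexSub, mem_tlHermSub, htr]

lemma reindexSub_prodCongr (e₁ : ι ≃ μ) (e₂ : κ ≃ ν) (P : Submodule ℝ (Matrix ι ι ℂ))
    (Q : Submodule ℝ (Matrix κ κ ℂ)) :
    reindexSub (e₁.prodCongr e₂) (tensorSub P Q) =
      tensorSub (reindexSub e₁ P) (reindexSub e₂ Q) := by
  simp only [reindexSub, tensorSub_eq_map₂, Submodule.map_map₂, Submodule.map₂_map_map]
  rfl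

lemma reindexSub_prodComm (P : Submodule ℝ (Matrix ι ι ℂ)) (Q : Submodule ℝ (Matrix κ κ ℂ)) :
    reindexSub (Equiv.prodComm ι κ) (tensorSub P Q) = tensorSub Q P := by
  rw [reindexSub, tensorSub_eq_map₂, tensorSub_eq_map₂, Submodule.map_map₂,
    ← Submodule.map₂_flip _ Q P]
  congr 1
  ext A B : 2
  ext ⟨k, i⟩ ⟨l, j⟩
  exact mul_comm _ _

lemma reindexSub_prodAssoc (P : Submodule ℝ (Matrix ι ι ℂ)) (Q : Submodule ℝ (Matrix κ κ ℂ))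
    (R : Submodule ℝ (Matrix μ μ ℂ)) :
    reindexSub (Equiv.prodAssoc ι κ μ) (tensorSub (tensorSub P Q) R) =
      tensorSub P (tensorSub Q R) := by
  apply le_antisymm
  · rw [reindexSub, Submodule.map_le_iff_le_comap, tensorSub_le_iff]
    intro X hX C hC
    suffices tensorSub P Q ≤ (tensorSub P (tensorSub Q R)).comap
        ((reindexLinearEquiv ℝ ℂ _ _).toLinearMap ∘ₗ (kroneckerBilinear (R := ℝ)).flip C) from
      this hX
    exact tensorSub_le_iff.mpr fun A hA B hB => by
      simpa [kronecker_assoc] using kronecker_mem_tensorSub hA (kronecker_mem_tensorSub hB hC)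
  · refine tensorSub_le_iff.mpr fun A hA Y hY => ?_
    suffices tensorSub Q R ≤
        (reindexSub (Equiv.prodAssoc ι κ μ) (tensorSub (tensorSub P Q) R)).comap
          (kroneckerBilinear (R := ℝ) A) from this hY
    refine tensorSub_le_iff.mpr fun B hB C hC => mem_reindexSub.mpr ?_
    change (A ⊗ₖ (B ⊗ₖ C)).submatrix _ _ ∈ _
    rw [← kronecker_assoc', submatrix_submatrix]
    simpa using kronecker_mem_tensorSub (kronecker_mem_tensorSub hA hB) hC

lemma reindexSub_prodUnique_symm {υ : Type} [Fintype υ] [DecidableEq υ] [Unique υ]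
    (P : Submodule ℝ (Matrix ι ι ℂ)) :
    reindexSub (Equiv.prodUnique ι υ).symm P = tensorSub P (idSub υ) := by
  rw [reindexSub, tensorSub_eq_map₂, idSub, Submodule.map₂_span_singleton_eq_map_flip]
  congr 1
  ext A : 1
  ext ⟨i, u⟩ ⟨j, v⟩
  simp [Subsingleton.elim u v]

lemma reindexSub_prodAssoc_symm (P : Submodule ℝ (Matrix ι ι ℂ))
    (Q : Submodule ℝ (Matrix κ κ ℂ)) (R : Submodule ℝ (Matrix μ μ ℂ)) :
    reindexSub (Equiv.prodAssoc ι κ μ).symm (tensorSub P (tensorSub Q R)) =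
      tensorSub (tensorSub P Q) R := by
  rw [← reindexSub_prodAssoc, reindexSub_reindexSub, Equiv.self_trans_symm, reindexSub_refl]

end Reindex

section Types

instance : Unique (Idx (QT.elem 1)) := inferInstanceAs (Unique (Fin 1))

local notation "I" => QT.elem 1

noncomputable def deltaCompl (x : QT) : Submodule ℝ (Matrix (Idx x) (Idx x) ℂ) :=
  perpWithin (Delta x) (tlHermSub (Idx x))

noncomputable def idSupDelta (x : QT) : Submodule ℝ (Matrix (Idx x) (Idx x) ℂ) :=
  idSub (Idx x) ⊔ Delta x

lemma delta_le_tlHermSub : ∀ x : QT, Delta x ≤ tlHermSub (Idx x)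
  | .elem _ => le_rfl
  | .arrow _ y => sup_le (tensorSub_le_tlHermSub_right le_rfl (delta_le_tlHermSub y))
      (tensorSub_le_tlHermSub_left (perpWithin_le _ _) (perpWithin_le _ _))

lemma delta_le_hermSub (x : QT) : Delta x ≤ hermSub (Idx x) :=
  (delta_le_tlHermSub x).trans tlHermSub_le_hermSub

lemma deltaCompl_le_hermSub (x : QT) : deltaCompl x ≤ hermSub (Idx x) :=
  (perpWithin_le _ _).trans tlHermSub_le_hermSub

lemma idSupDelta_le_hermSub (x : QT) : idSupDelta x ≤ hermSub (Idx x) :=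
  sup_le idSub_le_hermSub (delta_le_hermSub x)

lemma hermSub_eq_deltaCompl_sup_idSupDelta (x : QT) :
    hermSub (Idx x) = deltaCompl x ⊔ idSupDelta x := by
  have htl : tlHermSub (Idx x) = Delta x ⊔ deltaCompl x :=
    le_antisymm (le_sup_perpWithin (delta_le_tlHermSub x) tlHermSub_le_hermSub)
      (sup_le (delta_le_tlHermSub x) (perpWithin_le _ _))
  rw [hermSub_eq_idSub_sup_tlHermSub, htl, idSupDelta]
  ac_rfl

lemma traceOrtho_deltaCompl_idSupDelta (x : QT) : TraceOrtho (deltaCompl x) (idSupDelta x) :=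
  traceOrtho_sup_right.mpr
    ⟨traceOrtho_tlHermSub_idSub.mono (perpWithin_le _ _) le_rfl,
      (traceOrtho_perpWithin _ _).symm⟩

lemma delta_eq_idSupDelta_inf (x : QT) : Delta x = idSupDelta x ⊓ tlHermSub (Idx x) :=
  (idSub_sup_inf_tlHermSub (delta_le_tlHermSub x)).symm

lemma delta_unit : Delta I = ⊥ := tlHermSub_eq_bot

lemma delta_arrow_unit (w : QT) :
    Delta (w.arrow I) = tensorSub (deltaCompl w) (idSub (Idx I)) := by
  change tensorSub _ (Delta I) ⊔ tensorSub _ (perpWithin (Delta I) _) = _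
  rw [delta_unit, tensorSub_bot, perpWithin_bot, bot_sup_eq, hermSub_eq_idSub]
  rfl

lemma hermSub_arrow_unit (y : QT) :
    hermSub (Idx y × Idx I) =
      tensorSub (deltaCompl y) (idSub (Idx I)) ⊔ tensorSub (idSupDelta y) (idSub (Idx I)) := by
  rw [← tensorSub_sup_left, ← hermSub_eq_deltaCompl_sup_idSupDelta, ← hermSub_eq_idSub]
  exact hermSub_prod

lemma perpWithin_delta_arrow_unit (y : QT) :
    perpWithin (Delta (y.arrow I)) (hermSub (Idx (y.arrow I))) =
      tensorSub (idSupDelta y) (idSub (Idx I)) := by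
  rw [delta_arrow_unit]
  exact perpWithin_eq_of_traceOrtho
    (tensorSub_le_hermSub (deltaCompl_le_hermSub y) idSub_le_hermSub)
    (tensorSub_le_hermSub (idSupDelta_le_hermSub y) idSub_le_hermSub)
    (hermSub_arrow_unit y).le
    ((traceOrtho_deltaCompl_idSupDelta y).tensorSub_left _ _)

lemma delta_arrow_arrow_unit (x y : QT) :
    Delta (x.arrow (y.arrow I)) =
      tensorSub (hermSub (Idx x)) (tensorSub (deltaCompl y) (idSub (Idx I))) ⊔
        tensorSub (deltaCompl x) (tensorSub (idSupDelta y) (idSub (Idx I))) := by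
  change tensorSub _ (Delta (y.arrow I)) ⊔ tensorSub _ (perpWithin (Delta (y.arrow I)) _) = _
  rw [perpWithin_delta_arrow_unit, delta_arrow_unit]
  rfl

lemma tensorSub_idSub_idSupDelta_unit (x y : QT) :
    tensorSub (idSub (Idx x)) (tensorSub (idSupDelta y) (idSub (Idx I))) =
      idSub _ ⊔ tensorSub (idSub (Idx x)) (tensorSub (Delta y) (idSub (Idx I))) := by
  rw [idSupDelta, tensorSub_sup_left, tensorSub_sup_right, tensorSub_idSub_idSub,
    tensorSub_idSub_idSub]

lemma hermSub_arrow_arrow_unit (x y : QT) :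
    hermSub (Idx x × (Idx y × Idx I)) =
      tensorSub (hermSub (Idx x)) (tensorSub (deltaCompl y) (idSub (Idx I))) ⊔
          tensorSub (deltaCompl x) (tensorSub (idSupDelta y) (idSub (Idx I))) ⊔
        (tensorSub (idSub (Idx x)) (tensorSub (Delta y) (idSub (Idx I))) ⊔
          tensorSub (Delta x) (tensorSub (idSupDelta y) (idSub (Idx I)))) ⊔ idSub _ := by
  have hx : tensorSub (hermSub (Idx x)) (tensorSub (idSupDelta y) (idSub (Idx I))) =
      tensorSub (deltaCompl x) (tensorSub (idSupDelta y) (idSub (Idx I))) ⊔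
        (idSub _ ⊔ tensorSub (idSub (Idx x)) (tensorSub (Delta y) (idSub (Idx I))) ⊔
          tensorSub (Delta x) (tensorSub (idSupDelta y) (idSub (Idx I)))) := by
    rw [hermSub_eq_deltaCompl_sup_idSupDelta x, idSupDelta.eq_1 x, tensorSub_sup_left,
      tensorSub_sup_left, tensorSub_idSub_idSupDelta_unit]
  rw [hermSub_prod, hermSub_arrow_unit, tensorSub_sup_right, hx]
  ac_rfl

lemma deltaCompl_arrow_arrow_unit (x y : QT) :
    deltaCompl (x.arrow (y.arrow I)) =
      tensorSub (idSub (Idx x)) (tensorSub (Delta y) (idSub (Idx I))) ⊔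
        tensorSub (Delta x) (tensorSub (idSupDelta y) (idSub (Idx I))) := by
  have hortho_x := traceOrtho_deltaCompl_idSupDelta x
  have hortho_y := traceOrtho_deltaCompl_idSupDelta y
  have hS := delta_le_tlHermSub (x.arrow (y.arrow I))
  have hT : tensorSub (idSub (Idx x)) (tensorSub (Delta y) (idSub (Idx I))) ⊔
      tensorSub (Delta x) (tensorSub (idSupDelta y) (idSub (Idx I))) ≤
        tlHermSub (Idx (x.arrow (y.arrow I))) :=
    sup_le (tensorSub_le_tlHermSub_right idSub_le_hermSub
        (tensorSub_le_tlHermSub_left (delta_le_tlHermSub y) idSub_le_hermSub))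
      (tensorSub_le_tlHermSub_left (delta_le_tlHermSub x)
        (tensorSub_le_hermSub (idSupDelta_le_hermSub y) idSub_le_hermSub))
  rw [delta_arrow_arrow_unit] at hS
  rw [deltaCompl, delta_arrow_arrow_unit]
  refine perpWithin_eq_of_traceOrtho (hS.trans tlHermSub_le_hermSub) hT
    (tlHermSub_le_of_hermSub_le (sup_le hS hT) (hermSub_arrow_arrow_unit x y).le) ?_
  refine traceOrtho_sup_left.mpr
    ⟨traceOrtho_sup_right.mpr ⟨?_, ?_⟩, traceOrtho_sup_right.mpr ⟨?_, ?_⟩⟩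
  · exact ((hortho_y.mono le_rfl le_sup_right).tensorSub_left _ _).tensorSub_right _ _
  · exact (hortho_y.tensorSub_left _ _).tensorSub_right _ _
  · exact (hortho_x.mono le_rfl le_sup_left).tensorSub_left _ _
  · exact (hortho_x.mono le_rfl le_sup_right).tensorSub_left _ _

lemma reindexSub_etens_symm (x y : QT) (P : Submodule ℝ (Matrix (Idx x) (Idx x) ℂ))
    (Q : Submodule ℝ (Matrix (Idx y) (Idx y) ℂ)) :
    reindexSub (etens x y).symm (tensorSub P Q) =
      tensorSub (tensorSub P (tensorSub Q (idSub (Idx I)))) (idSub (Idx I)) := by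
  change reindexSub
    (((Equiv.refl (Idx x)).prodCongr (Equiv.prodUnique (Idx y) (Idx I)).symm).trans
      (Equiv.prodUnique (Idx x × (Idx y × Idx I)) (Idx I)).symm) (tensorSub P Q) = _
  rw [← reindexSub_reindexSub, reindexSub_prodCongr, reindexSub_refl, reindexSub_prodUnique_symm,
    reindexSub_prodUnique_symm]

lemma idSupDelta_tens (x y : QT) :
    idSupDelta (tens x y) =
      reindexSub (etens x y).symm (tensorSub (idSupDelta x) (idSupDelta y)) := by
  rw [reindexSub_etens_symm, idSupDelta.eq_1 x, tensorSub_sup_left,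
    tensorSub_idSub_idSupDelta_unit, sup_assoc, tensorSub_sup_left, tensorSub_idSub_idSub]
  show idSub _ ⊔ Delta ((x.arrow (y.arrow I)).arrow I) = _
  rw [delta_arrow_unit, deltaCompl_arrow_arrow_unit]
  rfl

lemma delta_eq_reindexSub {a b : QT} (e : Idx b ≃ Idx a)
    (h : idSupDelta a = reindexSub e (idSupDelta b)) : Delta a = reindexSub e (Delta b) := by
  rw [delta_eq_idSupDelta_inf, delta_eq_idSupDelta_inf, reindexSub_inf, reindexSub_tlHermSub, h]

end Types

section Normalization

lemma card_arrow (x y : QT) :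
    Fintype.card (Idx (x.arrow y)) = Fintype.card (Idx x) * Fintype.card (Idx y) :=
  Fintype.card_prod _ _

lemma card_tens (x y : QT) :
    Fintype.card (Idx (tens x y)) = Fintype.card (Idx x) * Fintype.card (Idx y) :=
  (Fintype.card_congr (etens x y)).trans (Fintype.card_prod _ _)

-- Division by zero makes `lam` vanish on types of dimension zero.
lemma lam_tens (x y : QT) :
    lam (tens x y) =
      if Fintype.card (Idx x) * Fintype.card (Idx y) = 0 then 0 else lam x * lam y := by
  have hI : Fintype.card (Idx (QT.elem 1)) = 1 := Fintype.card_fin 1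
  simp only [tens, lam, card_arrow, hI]
  split_ifs with h
  · simp [h]
  · obtain ⟨hx, hy⟩ := mul_ne_zero_iff.mp h
    field_simp
    push_cast
    ring

end Normalization

/-- The tensor product of types is commutative and associative up to type
equivalence: `x ⊗ y ≡ y ⊗ x` and `(x ⊗ y) ⊗ z ≡ x ⊗ (y ⊗ z)`, i.e. the pairs
`(λ, Δ)` coincide up to the canonical reordering of tensor factors. -/
theorem tens_comm_assoc (x y z : QT) :
    lam (tens x y) = lam (tens y x) ∧
    lam (tens (tens x y) z) = lam (tens x (tens y z)) ∧
    Delta (tens x y) =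
      Submodule.map
        (Matrix.reindexLinearEquiv ℝ ℂ
          ((etens y x).trans ((Equiv.prodComm (Idx y) (Idx x)).trans (etens x y).symm))
          ((etens y x).trans ((Equiv.prodComm (Idx y) (Idx x)).trans (etens x y).symm))).toLinearMap
        (Delta (tens y x)) ∧
    Delta (tens (tens x y) z) =
      Submodule.map
        (Matrix.reindexLinearEquiv ℝ ℂ
          ((etens x (tens y z)).trans
            (((Equiv.prodCongr (Equiv.refl (Idx x)) (etens y z)).trans
              (Equiv.prodAssoc (Idx x) (Idx y) (Idx z)).symm).trans
              ((Equiv.prodCongr (etens x y).symm (Equiv.refl (Idx z))).trans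
                (etens (tens x y) z).symm)))
          ((etens x (tens y z)).trans
            (((Equiv.prodCongr (Equiv.refl (Idx x)) (etens y z)).trans
              (Equiv.prodAssoc (Idx x) (Idx y) (Idx z)).symm).trans
              ((Equiv.prodCongr (etens x y).symm (Equiv.refl (Idx z))).trans
                (etens (tens x y) z).symm)))).toLinearMap
        (Delta (tens x (tens y z))) := by
  refine ⟨?_, ?_, delta_eq_reindexSub _ ?_, delta_eq_reindexSub _ ?_⟩
  · rw [lam_tens, lam_tens, mul_comm (Fintype.card (Idx y)), mul_comm (lam y)]
  · rw [lam_tens, lam_tens, lam_tens, lam_tens, card_tens, card_tens]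
    split_ifs <;> simp_all [mul_assoc]
  · rw [idSupDelta_tens, idSupDelta_tens, ← reindexSub_reindexSub, reindexSub_reindexSub_symm,
      ← reindexSub_reindexSub, reindexSub_prodComm]
  · -- Both sides are transports of `(E_x ⊗ E_y) ⊗ E_z`.
    rw [idSupDelta_tens x (tens y z), ← reindexSub_reindexSub, reindexSub_reindexSub_symm,
      ← reindexSub_reindexSub, ← reindexSub_reindexSub, ← reindexSub_reindexSub,
      reindexSub_prodCongr, reindexSub_refl, idSupDelta_tens y z, reindexSub_reindexSub_symm,
      reindexSub_prodAssoc_symm, reindexSub_prodCongr, reindexSub_refl, ← idSupDelta_tens,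
      ← idSupDelta_tens]
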